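/- arXiv:math/0502485 — 2 statements merged into one kernel-verified Lean document; each statement's English description precedes it below -/
import Mathlib

section
/- (Geronimus' theorem.) Let μ be a nontrivial probability measure on the unit circle, let F(z) = ∫ (e^{iθ} + z)/(e^{iθ} − z) dμ(θ) be its Carathéodory function, let f be its Schur function defined by F(z) = (1 + z·f(z))/(1 − z·f(z)) on 𝔻, and let γ_n(f) be the Schur parameters of f obtained from the Schur algorithm. Then γ_n(f) = α_n(dμ) for all n ≥ 0. -/
/-!
Let `H g (z) = ∫ w / (w - z) g(w) dμ(w)`, `uₙ = H Φₙ` and `vₙ = H Φₙ^* - ‖Φₙ‖²`. The Szegő recursion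
`Φₙ₊₁ = z Φₙ - ᾱₙ Φₙ^*`, `Φₙ₊₁^* = Φₙ^* - αₙ z Φₙ` gives `uₙ₊₁ = z uₙ - ᾱₙ vₙ` and
`vₙ₊₁ = vₙ - αₙ z uₙ`, which is the step of the Schur algorithm with parameter `αₙ`: if
`vₙ = z fₙ uₙ` and `fₙ(0) = αₙ`, then `vₙ₊₁ = z fₙ₊₁ uₙ₊₁`. Since `F = 2 u₀ - 1`, the relation
`F = (1 + z f) / (1 - z f)` is `v₀ = z f₀ u₀`. Finally `vₙ = z fₙ uₙ` forces `fₙ(0) = αₙ`, because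
orthogonality gives `uₙ = ‖Φₙ‖² zⁿ + O(zⁿ⁺¹)` and `vₙ = αₙ ‖Φₙ‖² zⁿ⁺¹ + O(zⁿ⁺²)`.
-/

open MeasureTheory Polynomial Filter

noncomputable section

/-- A nontrivial probability measure on the unit circle: a probability measure on `ℂ`
supported on `{z : ‖z‖ = 1}` that is not concentrated on any finite set
(equivalently, its support is infinite). -/
structure IsNontrivialOnCircle (μ : Measure ℂ) : Prop where
  prob : IsProbabilityMeasure μ
  onCircle : μ {z : ℂ | ‖z‖ = 1}ᶜ = 0
  infiniteSupport : ∀ s : Finset ℂ, μ ((↑s : Set ℂ)ᶜ) ≠ 0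

/-- `Φ` is the family of monic orthogonal polynomials for `μ`: each `Φ n` is monic of
degree `n` and orthogonal in `L²(∂𝔻, dμ)` to `z^j` for `j = 0, …, n-1`. -/
def IsMonicOPUC (μ : Measure ℂ) (Φ : ℕ → Polynomial ℂ) : Prop :=
  ∀ n : ℕ, ((Φ n).Monic ∧ (Φ n).natDegree = n) ∧
    ∀ j < n, ∫ z, (starRingEnd ℂ) z ^ j * (Φ n).eval z ∂μ = 0

/-- Verblunsky coefficients: `α n = -conj (Φ (n+1) (0))`. -/
def verblunsky (Φ : ℕ → Polynomial ℂ) (n : ℕ) : ℂ :=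
  - (starRingEnd ℂ) ((Φ (n + 1)).eval 0)

/-- Squared `L²(dμ)` norm of a polynomial. -/
def polyNormSq (μ : Measure ℂ) (P : Polynomial ℂ) : ℝ :=
  ∫ z, ‖P.eval z‖ ^ 2 ∂μ

/-- Orthonormal polynomial: `φ = Φ / ‖Φ‖_{L²(dμ)}`. -/
def orthonormalize (μ : Measure ℂ) (P : Polynomial ℂ) : Polynomial ℂ :=
  Polynomial.C ((Real.sqrt (polyNormSq μ P) : ℂ))⁻¹ * P

/-- The reversed polynomial `P^{*,n}(z) = z^n conj (P (1/conj z))`. -/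
def revStar (n : ℕ) (P : Polynomial ℂ) : Polynomial ℂ :=
  ∑ j ∈ Finset.range (n + 1),
    Polynomial.C ((starRingEnd ℂ) (P.coeff (n - j))) * Polynomial.X ^ j

open ComplexConjugate Topology

theorem conj_pow_mul_pow_of_norm_eq_one {w : ℂ} (hw : ‖w‖ = 1) {i n : ℕ} (hi : i ≤ n) :
    conj w ^ i * w ^ n = w ^ (n - i) := by
  have hw0 : w ≠ 0 := norm_ne_zero_iff.mp (hw ▸ one_ne_zero)
  rw [← Complex.inv_eq_conj hw, inv_pow, pow_sub₀ w hw0 hi, mul_comm]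

theorem conj_mul_self_of_norm_eq_one {w : ℂ} (hw : ‖w‖ = 1) : conj w * w = 1 := by
  simp [Complex.conj_mul', hw]

variable {μ : Measure ℂ}

namespace IsNontrivialOnCircle

theorem ae_norm_eq_one (hμ : IsNontrivialOnCircle μ) : ∀ᵐ w ∂μ, ‖w‖ = 1 :=
  ae_iff.mpr hμ.onCircle

theorem integrable_of_continuousOn (hμ : IsNontrivialOnCircle μ) {E : Type*}
    [NormedAddCommGroup E] {g : ℂ → E} (hg : ContinuousOn g (Metric.sphere 0 1)) :
    Integrable g μ := by
  have := hμ.prob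
  have hrestrict : μ.restrict (Metric.sphere 0 1) = μ :=
    Measure.restrict_eq_self_of_ae_mem (by simpa using hμ.ae_norm_eq_one)
  rw [← hrestrict]
  exact hg.integrableOn_compact (isCompact_sphere 0 1)

theorem polyNormSq_pos (hμ : IsNontrivialOnCircle μ) {p : ℂ[X]} (hp : p ≠ 0) :
    0 < polyNormSq μ p := by
  have hint : Integrable (fun w => ‖p.eval w‖ ^ 2) μ :=
    hμ.integrable_of_continuousOn (by fun_prop)
  refine (integral_nonneg fun w => by positivity).lt_of_ne fun h => ?_
  have hroot : ∀ᵐ w ∂μ, p.eval w = 0 := by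
    filter_upwards [(integral_eq_zero_iff_of_nonneg (fun w => by positivity) hint).mp h.symm]
      with w hw
    simpa using hw
  refine hμ.infiniteSupport p.roots.toFinset (measure_mono_null (fun w hw => ?_) (ae_iff.mp hroot))
  simpa [hp] using hw

end IsNontrivialOnCircle

def moment (μ : Measure ℂ) (j : ℕ) (p : ℂ[X]) : ℂ :=
  ∫ w, conj w ^ j * p.eval w ∂μ

theorem moment_C_mul (j : ℕ) (c : ℂ) (p : ℂ[X]) :
    moment μ j (C c * p) = c * moment μ j p := by
  simp only [moment, eval_mul, eval_C, mul_left_comm _ c]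
  exact integral_const_mul c _

namespace IsNontrivialOnCircle

theorem integrable_conj_pow_mul_eval (hμ : IsNontrivialOnCircle μ) (j : ℕ) (p : ℂ[X]) :
    Integrable (fun w => conj w ^ j * p.eval w) μ :=
  hμ.integrable_of_continuousOn (by fun_prop)

theorem moment_sub (hμ : IsNontrivialOnCircle μ) (j : ℕ) (p q : ℂ[X]) :
    moment μ j (p - q) = moment μ j p - moment μ j q := by
  simp only [moment, eval_sub, mul_sub]
  exact integral_sub (hμ.integrable_conj_pow_mul_eval j p) (hμ.integrable_conj_pow_mul_eval j q)

theorem moment_succ_X_mul (hμ : IsNontrivialOnCircle μ) (j : ℕ) (p : ℂ[X]) :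
    moment μ (j + 1) (X * p) = moment μ j p := by
  refine integral_congr_ae ?_
  filter_upwards [hμ.ae_norm_eq_one] with w hw
  rw [eval_mul, eval_X, pow_succ, mul_assoc, ← mul_assoc (conj w),
    conj_mul_self_of_norm_eq_one hw, one_mul]

theorem ofReal_polyNormSq_eq_sum (hμ : IsNontrivialOnCircle μ) (p : ℂ[X]) :
    (polyNormSq μ p : ℂ)
      = ∑ i ∈ Finset.range (p.natDegree + 1), conj (p.coeff i) * moment μ i p := by
  have hexpand : ∀ w, ((‖p.eval w‖ ^ 2 : ℝ) : ℂ)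
      = ∑ i ∈ Finset.range (p.natDegree + 1), conj (p.coeff i) * (conj w ^ i * p.eval w) := by
    intro w
    rw [Complex.ofReal_pow, ← Complex.conj_mul', eval_eq_sum_range, map_sum, Finset.sum_mul]
    simp only [map_mul, map_pow, mul_assoc]
  simp only [polyNormSq, moment, ← integral_const_mul]
  rw [← integral_complex_ofReal, integral_congr_ae (ae_of_all _ hexpand), integral_finsetSum]
  exact fun i _ => (hμ.integrable_conj_pow_mul_eval i p).const_mul _

theorem eq_zero_of_moment_eq_zero (hμ : IsNontrivialOnCircle μ) {p : ℂ[X]}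
    (h : ∀ i ≤ p.natDegree, moment μ i p = 0) : p = 0 := by
  by_contra hp
  have hsum := hμ.ofReal_polyNormSq_eq_sum p
  rw [Finset.sum_eq_zero fun i hi => by rw [h i (Finset.mem_range_succ_iff.mp hi), mul_zero],
    Complex.ofReal_eq_zero] at hsum
  exact (hμ.polyNormSq_pos hp).ne' hsum

theorem eq_zero_of_coeff_zero_of_moment_eq_zero (hμ : IsNontrivialOnCircle μ) {p : ℂ[X]} {n : ℕ}
    (hp0 : p.coeff 0 = 0) (hdeg : p.natDegree ≤ n)
    (h : ∀ j, 0 < j → j ≤ n → moment μ j p = 0) : p = 0 := by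
  obtain ⟨q, rfl⟩ := X_dvd_iff.mpr hp0
  rcases eq_or_ne q 0 with rfl | hq
  · rw [mul_zero]
  refine absurd (hμ.eq_zero_of_moment_eq_zero fun i hi => ?_) hq
  rw [natDegree_X_mul hq] at hdeg
  rw [← hμ.moment_succ_X_mul]
  exact h (i + 1) i.succ_pos (by omega)

end IsNontrivialOnCircle

theorem revStar_coeff (n : ℕ) (p : ℂ[X]) (k : ℕ) :
    (revStar n p).coeff k = if k ≤ n then conj (p.coeff (n - k)) else 0 := by
  simp [revStar, coeff_X_pow]

theorem natDegree_revStar_le (n : ℕ) (p : ℂ[X]) : (revStar n p).natDegree ≤ n :=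
  natDegree_le_iff_coeff_eq_zero.mpr fun k hk => by simp [revStar_coeff, Nat.not_le.mpr hk]

theorem eval_revStar_of_norm_eq_one {n : ℕ} {p : ℂ[X]} (hp : p.natDegree ≤ n) {w : ℂ}
    (hw : ‖w‖ = 1) : (revStar n p).eval w = w ^ n * conj (p.eval w) := by
  rw [eval_eq_sum_range' (Nat.lt_succ_of_le hp), map_sum, Finset.mul_sum,
    eval_eq_sum_range' (Nat.lt_succ_of_le (natDegree_revStar_le n p)),
    ← Finset.sum_range_reflect]
  refine Finset.sum_congr rfl fun i hi => ?_
  have hi : i ≤ n := Finset.mem_range_succ_iff.mp hi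
  rw [revStar_coeff, if_pos (by omega), map_mul, map_pow, mul_left_comm,
    mul_comm (w ^ n), conj_pow_mul_pow_of_norm_eq_one hw hi]
  congr 3
  omega

namespace IsNontrivialOnCircle

theorem moment_revStar_eq_conj (hμ : IsNontrivialOnCircle μ) {n j : ℕ} {p : ℂ[X]}
    (hp : p.natDegree ≤ n) (hj : j ≤ n) : moment μ j (revStar n p) = conj (moment μ (n - j) p) := by
  rw [moment, moment, ← integral_conj]
  refine integral_congr_ae ?_
  filter_upwards [hμ.ae_norm_eq_one] with w hw
  rw [eval_revStar_of_norm_eq_one hp hw, ← mul_assoc, conj_pow_mul_pow_of_norm_eq_one hw hj,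
    map_mul, map_pow, Complex.conj_conj]

theorem moment_succ_revStar_eq_conj (hμ : IsNontrivialOnCircle μ) {n : ℕ} {p : ℂ[X]}
    (hp : p.natDegree ≤ n) : moment μ (n + 1) (revStar n p) = conj (moment μ 0 (X * p)) := by
  rw [moment, moment, ← integral_conj]
  refine integral_congr_ae ?_
  filter_upwards [hμ.ae_norm_eq_one] with w hw
  rw [eval_revStar_of_norm_eq_one hp hw, pow_succ', mul_assoc, ← mul_assoc (conj w ^ n),
    conj_pow_mul_pow_of_norm_eq_one hw le_rfl]
  simp

end IsNontrivialOnCircle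

namespace IsMonicOPUC

variable {Φ : ℕ → ℂ[X]}

theorem isMonicOfDegree (hΦ : IsMonicOPUC μ Φ) (n : ℕ) : (Φ n).IsMonicOfDegree n :=
  ⟨(hΦ n).1.2, (hΦ n).1.1⟩

theorem coeff_self (hΦ : IsMonicOPUC μ Φ) (n : ℕ) : (Φ n).coeff n = 1 := by
  simpa [leadingCoeff, (hΦ.isMonicOfDegree n).natDegree_eq] using
    (hΦ.isMonicOfDegree n).leadingCoeff_eq

theorem moment_eq_zero (hΦ : IsMonicOPUC μ Φ) {n j : ℕ} (hj : j < n) : moment μ j (Φ n) = 0 :=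
  (hΦ n).2 j hj

theorem apply_zero (hΦ : IsMonicOPUC μ Φ) : Φ 0 = 1 :=
  isMonicOfDegree_zero_iff.mp (hΦ.isMonicOfDegree 0)

theorem moment_self (hμ : IsNontrivialOnCircle μ) (hΦ : IsMonicOPUC μ Φ) (n : ℕ) :
    moment μ n (Φ n) = polyNormSq μ (Φ n) := by
  rw [hμ.ofReal_polyNormSq_eq_sum, (hΦ.isMonicOfDegree n).natDegree_eq, Finset.sum_range_succ,
    Finset.sum_eq_zero fun i hi => by rw [hΦ.moment_eq_zero (Finset.mem_range.mp hi), mul_zero],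
    hΦ.coeff_self, map_one, zero_add, one_mul]

theorem moment_zero_revStar (hμ : IsNontrivialOnCircle μ) (hΦ : IsMonicOPUC μ Φ) (n : ℕ) :
    moment μ 0 (revStar n (Φ n)) = polyNormSq μ (Φ n) := by
  rw [hμ.moment_revStar_eq_conj (hΦ.isMonicOfDegree n).natDegree_eq.le n.zero_le, Nat.sub_zero,
    hΦ.moment_self hμ, Complex.conj_ofReal]

theorem moment_revStar_eq_zero (hμ : IsNontrivialOnCircle μ) (hΦ : IsMonicOPUC μ Φ) {n j : ℕ}
    (hj0 : 0 < j) (hjn : j ≤ n) : moment μ j (revStar n (Φ n)) = 0 := by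
  rw [hμ.moment_revStar_eq_conj (hΦ.isMonicOfDegree n).natDegree_eq.le hjn,
    hΦ.moment_eq_zero (by omega), map_zero]

theorem eq_C_mul_revStar (hμ : IsNontrivialOnCircle μ) (hΦ : IsMonicOPUC μ Φ) {n : ℕ} {p : ℂ[X]}
    (hdeg : p.natDegree ≤ n) (horth : ∀ j, 0 < j → j ≤ n → moment μ j p = 0) :
    p = C (p.coeff 0) * revStar n (Φ n) := by
  refine sub_eq_zero.mp <|
    hμ.eq_zero_of_coeff_zero_of_moment_eq_zero (n := n) ?_ ?_ fun j hj0 hjn => ?_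
  · simp [revStar_coeff, hΦ.coeff_self]
  · simpa using natDegree_sub_le_of_le hdeg
      ((natDegree_C_mul_le _ _).trans (natDegree_revStar_le n _))
  · rw [hμ.moment_sub, moment_C_mul, horth j hj0 hjn, hΦ.moment_revStar_eq_zero hμ hj0 hjn,
      mul_zero, sub_zero]

theorem szego_recursion (hμ : IsNontrivialOnCircle μ) (hΦ : IsMonicOPUC μ Φ) (n : ℕ) :
    Φ (n + 1) = X * Φ n - C (conj (verblunsky Φ n)) * revStar n (Φ n) := by
  have hdeg : (Φ (n + 1) - X * Φ n).natDegree ≤ n := Nat.lt_succ_iff.mp <|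
    (hΦ.isMonicOfDegree (n + 1)).natDegree_sub_lt n.succ_ne_zero
      (by simpa [add_comm] using (isMonicOfDegree_X ℂ).mul (hΦ.isMonicOfDegree n))
  have horth : ∀ j, 0 < j → j ≤ n → moment μ j (Φ (n + 1) - X * Φ n) = 0 := by
    intro j hj0 hjn
    obtain ⟨i, rfl⟩ := Nat.exists_eq_add_of_lt hj0
    rw [hμ.moment_sub, zero_add, hμ.moment_succ_X_mul, hΦ.moment_eq_zero (by omega),
      hΦ.moment_eq_zero (by omega), sub_self]
  have h := hΦ.eq_C_mul_revStar hμ hdeg horth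
  rw [coeff_sub, mul_coeff_zero, coeff_X_zero, zero_mul, sub_zero, coeff_zero_eq_eval_zero] at h
  rw [verblunsky, map_neg, Complex.conj_conj, map_neg, neg_mul, sub_neg_eq_add, ← h]
  ring

theorem moment_zero_X_mul (hμ : IsNontrivialOnCircle μ) (hΦ : IsMonicOPUC μ Φ) (n : ℕ) :
    moment μ 0 (X * Φ n) = conj (verblunsky Φ n) * polyNormSq μ (Φ n) := by
  have h := congrArg (moment μ 0) (hΦ.szego_recursion hμ n)
  rw [hΦ.moment_eq_zero n.succ_pos, hμ.moment_sub, moment_C_mul, hΦ.moment_zero_revStar hμ] at h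
  exact sub_eq_zero.mp h.symm

theorem integral_mul_eval (hμ : IsNontrivialOnCircle μ) (hΦ : IsMonicOPUC μ Φ) (n : ℕ) :
    ∫ w, w * (Φ n).eval w ∂μ = conj (verblunsky Φ n) * polyNormSq μ (Φ n) := by
  simpa [moment] using hΦ.moment_zero_X_mul hμ n

theorem moment_succ_revStar (hμ : IsNontrivialOnCircle μ) (hΦ : IsMonicOPUC μ Φ) (n : ℕ) :
    moment μ (n + 1) (revStar n (Φ n)) = verblunsky Φ n * polyNormSq μ (Φ n) := by
  rw [hμ.moment_succ_revStar_eq_conj (hΦ.isMonicOfDegree n).natDegree_eq.le,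
    hΦ.moment_zero_X_mul hμ, map_mul, Complex.conj_conj, Complex.conj_ofReal]

theorem polyNormSq_succ (hμ : IsNontrivialOnCircle μ) (hΦ : IsMonicOPUC μ Φ) (n : ℕ) :
    (polyNormSq μ (Φ (n + 1)) : ℂ)
      = (1 - conj (verblunsky Φ n) * verblunsky Φ n) * polyNormSq μ (Φ n) := by
  rw [← hΦ.moment_self hμ, hΦ.szego_recursion hμ, hμ.moment_sub, moment_C_mul,
    hμ.moment_succ_X_mul, hΦ.moment_self hμ, hΦ.moment_succ_revStar hμ]
  ring

theorem eval_revStar_succ (hμ : IsNontrivialOnCircle μ) (hΦ : IsMonicOPUC μ Φ) (n : ℕ) {w : ℂ}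
    (hw : ‖w‖ = 1) : (revStar (n + 1) (Φ (n + 1))).eval w
      = (revStar n (Φ n)).eval w - verblunsky Φ n * (w * (Φ n).eval w) := by
  have hdeg (k : ℕ) : (Φ k).natDegree ≤ k := (hΦ.isMonicOfDegree k).natDegree_eq.le
  rw [eval_revStar_of_norm_eq_one (hdeg _) hw, eval_revStar_of_norm_eq_one (hdeg n) hw,
    hΦ.szego_recursion hμ]
  simp only [eval_sub, eval_mul, eval_X, eval_C, eval_revStar_of_norm_eq_one (hdeg n) hw,
    map_sub, map_mul, map_pow, Complex.conj_conj]
  have hc := conj_mul_self_of_norm_eq_one hw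
  have hcn : conj w ^ n * w ^ n = 1 := by rw [← mul_pow, hc, one_pow]
  linear_combination (w ^ n * conj ((Φ n).eval w)) * hc - (verblunsky Φ n * w * (Φ n).eval w) * hcn

end IsMonicOPUC

/-- On the unit circle `w / (w - z) = ∑ₖ (z * conj w) ^ k`, so this is the generating function
of the moments `∫ conj w ^ k * g w dμ`; for `g = 1` it is `(F + 1) / 2`. -/
def cauchyTransform (μ : Measure ℂ) (g : ℂ → ℂ) (z : ℂ) : ℂ :=
  ∫ w, w / (w - z) * g w ∂μ

namespace IsNontrivialOnCircle

variable {g h : ℂ → ℂ} {z : ℂ}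

theorem integrable_kernel_mul (hμ : IsNontrivialOnCircle μ) (hg : Continuous g) (hz : ‖z‖ < 1) :
    Integrable (fun w => w / (w - z) * g w) μ := by
  refine hμ.integrable_of_continuousOn (ContinuousOn.mul ?_ hg.continuousOn)
  refine continuousOn_id.div (continuousOn_id.sub continuousOn_const) fun w hw => ?_
  exact sub_ne_zero.mpr (ne_of_apply_ne norm (mem_sphere_zero_iff_norm.mp hw ▸ hz.ne'))

theorem cauchyTransform_sub_mul (hμ : IsNontrivialOnCircle μ) (hg : Continuous g)
    (hh : Continuous h) (hz : ‖z‖ < 1) (c : ℂ) :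
    cauchyTransform μ (fun w => g w - c * h w) z
      = cauchyTransform μ g z - c * cauchyTransform μ h z := by
  simp only [cauchyTransform, mul_sub, mul_left_comm _ c]
  rw [integral_sub (hμ.integrable_kernel_mul hg hz) ((hμ.integrable_kernel_mul hh hz).const_mul c),
    integral_const_mul]

theorem cauchyTransform_eq_add (hμ : IsNontrivialOnCircle μ) (hg : Continuous g) (hz : ‖z‖ < 1) :
    cauchyTransform μ g z = ∫ w, g w ∂μ + z * cauchyTransform μ (fun w => conj w * g w) z := by
  have hkernel : ∀ᵐ w ∂μ, w / (w - z) * g w = g w + z * (w / (w - z) * (conj w * g w)) := by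
    filter_upwards [hμ.ae_norm_eq_one] with w hw
    have hwz : w - z ≠ 0 := sub_ne_zero.mpr (ne_of_apply_ne norm (hw ▸ hz.ne'))
    have hc := conj_mul_self_of_norm_eq_one hw
    field_simp
    linear_combination (-z * g w) * hc
  rw [cauchyTransform, integral_congr_ae hkernel, cauchyTransform, ← integral_const_mul,
    integral_add (hμ.integrable_of_continuousOn hg.continuousOn)
      ((hμ.integrable_kernel_mul (by fun_prop) hz).const_mul z)]

theorem cauchyTransform_eq_sum_add (hμ : IsNontrivialOnCircle μ) (hg : Continuous g) (hz : ‖z‖ < 1)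
    (m : ℕ) : cauchyTransform μ g z = ∑ k ∈ Finset.range m, z ^ k * ∫ w, conj w ^ k * g w ∂μ
      + z ^ m * cauchyTransform μ (fun w => conj w ^ m * g w) z := by
  induction m with
  | zero => simp
  | succ m ih =>
    rw [ih, hμ.cauchyTransform_eq_add (by fun_prop) hz, Finset.sum_range_succ]
    simp only [← mul_assoc, ← pow_succ']
    ring

theorem cauchyTransform_X_mul (hμ : IsNontrivialOnCircle μ) (hg : Continuous g) (hz : ‖z‖ < 1) :
    cauchyTransform μ (fun w => w * g w) z = ∫ w, w * g w ∂μ + z * cauchyTransform μ g z := by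
  rw [hμ.cauchyTransform_eq_add (by fun_prop) hz]
  congr 2
  refine integral_congr_ae ?_
  filter_upwards [hμ.ae_norm_eq_one] with w hw
  rw [← mul_assoc (conj w), conj_mul_self_of_norm_eq_one hw, one_mul]

theorem tendsto_cauchyTransform (hμ : IsNontrivialOnCircle μ) (hg : Continuous g) :
    Tendsto (cauchyTransform μ g) (𝓝 0) (𝓝 (∫ w, g w ∂μ)) := by
  have hw0 : ∀ᵐ w ∂μ, w ≠ 0 := hμ.ae_norm_eq_one.mono fun w hw => norm_ne_zero_iff.mp (by simp [hw])
  have hcont : ContinuousAt (cauchyTransform μ g) 0 := by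
    refine continuousAt_of_dominated (bound := fun w => 2 * ‖g w‖) ?_ ?_
      ((hμ.integrable_of_continuousOn hg.continuousOn).norm.const_mul 2) ?_
    · filter_upwards [Metric.ball_mem_nhds 0 one_pos] with z hz
      exact (hμ.integrable_kernel_mul hg (mem_ball_zero_iff.mp hz)).aestronglyMeasurable
    · filter_upwards [Metric.ball_mem_nhds 0 one_half_pos] with z hz
      filter_upwards [hμ.ae_norm_eq_one] with w hw
      have hwz : 1 / 2 ≤ ‖w - z‖ := by
        have := norm_sub_norm_le w z
        rw [mem_ball_zero_iff] at hz
        linarith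
      rw [norm_mul, norm_div, hw]
      gcongr
      rw [div_le_iff₀ (by linarith)]
      linarith
    · filter_upwards [hw0] with w hw
      exact (continuousAt_const.div (continuousAt_const.sub continuousAt_id)
        (by simpa using hw)).mul continuousAt_const
  have hzero : cauchyTransform μ g 0 = ∫ w, g w ∂μ := by
    refine integral_congr_ae ?_
    filter_upwards [hw0] with w hw
    rw [sub_zero, div_self hw, one_mul]
  exact hzero ▸ hcont.tendsto

end IsNontrivialOnCircle

def cauchyOP (μ : Measure ℂ) (Φ : ℕ → ℂ[X]) (n : ℕ) (z : ℂ) : ℂ :=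
  cauchyTransform μ (Φ n).eval z

def cauchyRevOP (μ : Measure ℂ) (Φ : ℕ → ℂ[X]) (n : ℕ) (z : ℂ) : ℂ :=
  cauchyTransform μ (revStar n (Φ n)).eval z - polyNormSq μ (Φ n)

namespace IsMonicOPUC

variable {Φ : ℕ → ℂ[X]} {z : ℂ}

theorem integral_herglotz (hμ : IsNontrivialOnCircle μ) (hΦ : IsMonicOPUC μ Φ) (hz : ‖z‖ < 1) :
    ∫ w, (w + z) / (w - z) ∂μ = 2 * cauchyOP μ Φ 0 z - 1 := by
  have := hμ.prob
  have hkernel : ∀ᵐ w ∂μ, (w + z) / (w - z) = 2 * (w / (w - z) * (Φ 0).eval w) - 1 := by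
    filter_upwards [hμ.ae_norm_eq_one] with w hw
    have hwz : w - z ≠ 0 := sub_ne_zero.mpr (ne_of_apply_ne norm (hw ▸ hz.ne'))
    rw [hΦ.apply_zero, eval_one]
    field_simp
    ring
  rw [integral_congr_ae hkernel,
    integral_sub ((hμ.integrable_kernel_mul (by fun_prop) hz).const_mul 2) (integrable_const 1),
    integral_const_mul]
  simp [cauchyOP, cauchyTransform]

theorem cauchyRevOP_zero (hμ : IsNontrivialOnCircle μ) (hΦ : IsMonicOPUC μ Φ) :
    cauchyRevOP μ Φ 0 z = cauchyOP μ Φ 0 z - 1 := by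
  have := hμ.prob
  simp [cauchyRevOP, cauchyOP, hΦ.apply_zero, revStar, polyNormSq]

theorem cauchyOP_succ (hμ : IsNontrivialOnCircle μ) (hΦ : IsMonicOPUC μ Φ) (n : ℕ) (hz : ‖z‖ < 1) :
    cauchyOP μ Φ (n + 1) z
      = z * cauchyOP μ Φ n z - conj (verblunsky Φ n) * cauchyRevOP μ Φ n z := by
  have heval : (Φ (n + 1)).eval
      = fun w => w * (Φ n).eval w - conj (verblunsky Φ n) * (revStar n (Φ n)).eval w := by
    ext w
    rw [hΦ.szego_recursion hμ]
    simp
  rw [cauchyOP, heval, hμ.cauchyTransform_sub_mul (by fun_prop) (by fun_prop) hz,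
    hμ.cauchyTransform_X_mul (by fun_prop) hz, hΦ.integral_mul_eval hμ, cauchyRevOP, cauchyOP]
  ring

theorem cauchyRevOP_succ (hμ : IsNontrivialOnCircle μ) (hΦ : IsMonicOPUC μ Φ) (n : ℕ)
    (hz : ‖z‖ < 1) :
    cauchyRevOP μ Φ (n + 1) z = cauchyRevOP μ Φ n z - verblunsky Φ n * (z * cauchyOP μ Φ n z) := by
  have heval : cauchyTransform μ (revStar (n + 1) (Φ (n + 1))).eval z
      = cauchyTransform μ
          (fun w => (revStar n (Φ n)).eval w - verblunsky Φ n * (w * (Φ n).eval w)) z := by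
    refine integral_congr_ae ?_
    filter_upwards [hμ.ae_norm_eq_one] with w hw
    rw [hΦ.eval_revStar_succ hμ n hw]
  rw [cauchyRevOP, heval, hμ.cauchyTransform_sub_mul (by fun_prop) (by fun_prop) hz,
    hμ.cauchyTransform_X_mul (by fun_prop) hz, hΦ.integral_mul_eval hμ, hΦ.polyNormSq_succ hμ,
    cauchyRevOP, cauchyOP]
  ring

theorem cauchyOP_eq_pow_mul (hμ : IsNontrivialOnCircle μ) (hΦ : IsMonicOPUC μ Φ) (n : ℕ)
    (hz : ‖z‖ < 1) :
    cauchyOP μ Φ n z = z ^ n * cauchyTransform μ (fun w => conj w ^ n * (Φ n).eval w) z := by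
  rw [cauchyOP, hμ.cauchyTransform_eq_sum_add (by fun_prop) hz n, Finset.sum_eq_zero, zero_add]
  intro k hk
  rw [← moment, hΦ.moment_eq_zero (Finset.mem_range.mp hk), mul_zero]

theorem cauchyRevOP_eq_pow_mul (hμ : IsNontrivialOnCircle μ) (hΦ : IsMonicOPUC μ Φ) (n : ℕ)
    (hz : ‖z‖ < 1) : cauchyRevOP μ Φ n z
      = z ^ (n + 1)
        * cauchyTransform μ (fun w => conj w ^ (n + 1) * (revStar n (Φ n)).eval w) z := by
  rw [cauchyRevOP, hμ.cauchyTransform_eq_sum_add (by fun_prop) hz (n + 1), Finset.sum_range_succ',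
    Finset.sum_eq_zero, zero_add, ← moment, hΦ.moment_zero_revStar hμ, pow_zero, one_mul,
    add_sub_cancel_left]
  intro k hk
  rw [← moment, hΦ.moment_revStar_eq_zero hμ k.succ_pos (Finset.mem_range.mp hk), mul_zero]

theorem cauchyRevOP_zero_eq_mul (hμ : IsNontrivialOnCircle μ) (hΦ : IsMonicOPUC μ Φ) {z s : ℂ}
    (hz : ‖z‖ < 1) (hs : ‖s‖ < 1) (hF : ∫ w, (w + z) / (w - z) ∂μ = (1 + z * s) / (1 - z * s)) :
    cauchyRevOP μ Φ 0 z = z * s * cauchyOP μ Φ 0 z := by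
  have hD : 1 - z * s ≠ 0 := sub_ne_zero.mpr <| ne_of_apply_ne norm <| by
    rw [norm_one, norm_mul]
    exact (mul_lt_one_of_nonneg_of_lt_one_left (norm_nonneg z) hz hs.le).ne'
  have h := hΦ.integral_herglotz hμ hz
  rw [hF, div_eq_iff hD] at h
  rw [hΦ.cauchyRevOP_zero hμ]
  linear_combination (-1 / 2 : ℂ) * h

theorem eq_verblunsky_of_cauchyRevOP_eq (hμ : IsNontrivialOnCircle μ) (hΦ : IsMonicOPUC μ Φ)
    {n : ℕ} {s : ℂ → ℂ} (hs : ContinuousAt s 0)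
    (h : ∀ z ∈ Metric.ball (0 : ℂ) 1, cauchyRevOP μ Φ n z = z * s z * cauchyOP μ Φ n z) :
    s 0 = verblunsky Φ n := by
  set A := cauchyTransform μ (fun w => conj w ^ n * (Φ n).eval w)
  set B := cauchyTransform μ (fun w => conj w ^ (n + 1) * (revStar n (Φ n)).eval w)
  have hA : Tendsto A (𝓝 0) (𝓝 (polyNormSq μ (Φ n))) := by
    convert hμ.tendsto_cauchyTransform (g := fun w => conj w ^ n * (Φ n).eval w) (by fun_prop)
      using 2
    exact (hΦ.moment_self hμ n).symm
  have hB : Tendsto B (𝓝 0) (𝓝 (verblunsky Φ n * polyNormSq μ (Φ n))) := by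
    convert hμ.tendsto_cauchyTransform
      (g := fun w => conj w ^ (n + 1) * (revStar n (Φ n)).eval w) (by fun_prop) using 2
    exact (hΦ.moment_succ_revStar hμ n).symm
  have hBA : B =ᶠ[𝓝[≠] 0] fun z => s z * A z := by
    filter_upwards [nhdsWithin_le_nhds (Metric.ball_mem_nhds 0 one_pos), self_mem_nhdsWithin]
      with z hz hz0
    have hz1 := mem_ball_zero_iff.mp hz
    have hzs := h z hz
    rw [hΦ.cauchyRevOP_eq_pow_mul hμ n hz1, hΦ.cauchyOP_eq_pow_mul hμ n hz1] at hzs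
    refine mul_left_cancel₀ (pow_ne_zero (n + 1) hz0) ?_
    linear_combination hzs
  have hlim := tendsto_nhds_unique ((hB.mono_left nhdsWithin_le_nhds).congr' hBA)
    ((hs.tendsto.mul hA).mono_left nhdsWithin_le_nhds)
  have hN : (polyNormSq μ (Φ n) : ℂ) ≠ 0 :=
    Complex.ofReal_ne_zero.mpr (hμ.polyNormSq_pos (hΦ.isMonicOfDegree n).ne_zero).ne'
  exact (mul_right_cancel₀ hN hlim).symm

end IsMonicOPUC

theorem schur_step_ratio {a z s f u v : ℂ} (ha : ‖a‖ < 1) (hz : ‖z‖ < 1) (hs : ‖s‖ < 1)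
    (hf : f = (a + z * s) / (1 + conj a * z * s)) (hv : v = z * f * u) :
    v - a * (z * u) = z * s * (z * u - conj a * v) := by
  have hD : 1 + conj a * z * s ≠ 0 := by
    refine Complex.slitPlane_ne_zero (Complex.mem_slitPlane_of_norm_lt_one ?_)
    rw [norm_mul, norm_mul, Complex.norm_conj]
    exact mul_lt_one_of_nonneg_of_lt_one_left (by positivity)
      (mul_lt_one_of_nonneg_of_lt_one_left (norm_nonneg a) ha hz.le) hs.le
  rw [eq_div_iff hD] at hf
  rw [hv]
  linear_combination (z * u) * hf

/-- Geronimus' theorem: the Schur parameters of the Schur function of `μ`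
coincide with the Verblunsky coefficients of `μ`. Here `f 0` is the Schur function of
`μ` (related to the Carathéodory function `F(z) = ∫ (w+z)/(w−z) dμ(w)` by
`F = (1+zf)/(1−zf)`), and `f (n+1)` is obtained from `f n` via the Schur algorithm. -/
theorem stmt6 (μ : Measure ℂ) (hμ : IsNontrivialOnCircle μ)
    (Φ : ℕ → Polynomial ℂ) (hΦ : IsMonicOPUC μ Φ)
    (f : ℕ → ℂ → ℂ)
    (hanal : ∀ n, DifferentiableOn ℂ (f n) (Metric.ball 0 1))
    (hbound : ∀ n, ∀ z ∈ Metric.ball (0:ℂ) 1, ‖f n z‖ < 1)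
    (hCara : ∀ z ∈ Metric.ball (0:ℂ) 1,
      (∫ w, (w + z) / (w - z) ∂μ) = (1 + z * f 0 z) / (1 - z * f 0 z))
    (hSchur : ∀ n, ∀ z ∈ Metric.ball (0:ℂ) 1,
      f n z = (f n 0 + z * f (n + 1) z) / (1 + (starRingEnd ℂ) (f n 0) * z * f (n + 1) z)) :
    ∀ n : ℕ, f n 0 = verblunsky Φ n := by
  have hcont (n : ℕ) : ContinuousAt (f n) 0 :=
    (hanal n).continuousOn.continuousAt (Metric.ball_mem_nhds 0 one_pos)
  suffices key : ∀ n, ∀ z ∈ Metric.ball (0 : ℂ) 1,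
      cauchyRevOP μ Φ n z = z * f n z * cauchyOP μ Φ n z from
    fun n => hΦ.eq_verblunsky_of_cauchyRevOP_eq hμ (hcont n) (key n)
  intro n
  induction n with
  | zero =>
    intro z hz
    exact hΦ.cauchyRevOP_zero_eq_mul hμ (mem_ball_zero_iff.mp hz) (hbound 0 z hz) (hCara z hz)
  | succ n ih =>
    intro z hz
    have hz1 := mem_ball_zero_iff.mp hz
    have hα : f n 0 = verblunsky Φ n := hΦ.eq_verblunsky_of_cauchyRevOP_eq hμ (hcont n) ih
    rw [hΦ.cauchyRevOP_succ hμ n hz1, hΦ.cauchyOP_succ hμ n hz1]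
    exact schur_step_ratio (hα ▸ hbound n 0 (Metric.mem_ball_self one_pos)) hz1
      (hbound (n + 1) z hz) (hα ▸ hSchur n z hz) (ih z hz)

end
end

section
/- Let μ be a nontrivial probability measure on the unit circle. Then every zero of the monic orthogonal polynomial Φ_n(·; dμ) lies in the open unit disk 𝔻, and every zero of the reversed polynomial Φ_n^* lies in ℂ \ closure(𝔻). -/
open MeasureTheory Polynomial Filter

noncomputable section

/-!
Write `Φₙ = (z - z₀) q` with `deg q < n`. Orthogonality makes `Φₙ ⊥ q` in `L²(μ)`, so Pythagoras
for `z q = Φₙ + z₀ q`, together with `‖z q‖ = ‖q‖` (multiplication by `z` is unitary on the circle),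
gives `(1 - |z₀|²) ‖q‖² = ‖Φₙ‖²`, which is positive because a nonzero polynomial cannot vanish
`μ`-a.e. when `μ` has infinite support. The zeros of `Φₙ^*` are the points `1 / conj z₀`.
-/

open scoped ComplexConjugate InnerProductSpace

section CircleL2

variable {μ : Measure ℂ} [IsFiniteMeasure μ]

theorem memLp_eval_of_ae_norm_eq_one (hμ : ∀ᵐ z ∂μ, ‖z‖ = 1) (P : ℂ[X]) (p : ENNReal) :
    MemLp (fun z => P.eval z) p μ := by
  obtain ⟨C, hC⟩ := (isCompact_sphere (0 : ℂ) 1).exists_bound_of_continuousOn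
    P.continuous.continuousOn
  refine .of_bound P.continuous.aestronglyMeasurable C ?_
  filter_upwards [hμ] with z hz
  exact hC z (by simpa using hz)

def polyToL2 (hμ : ∀ᵐ z ∂μ, ‖z‖ = 1) : ℂ[X] →ₗ[ℂ] Lp ℂ 2 μ where
  toFun P := (memLp_eval_of_ae_norm_eq_one hμ P 2).toLp fun z => P.eval z
  map_add' P Q := by
    rw [← MemLp.toLp_add]
    exact (MemLp.toLp_eq_toLp_iff _ _).2 (.of_forall fun z => eval_add)
  map_smul' c P := by
    rw [RingHom.id_apply, ← MemLp.toLp_const_smul]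
    exact (MemLp.toLp_eq_toLp_iff _ _).2 (.of_forall fun z => eval_smul ..)

theorem coeFn_polyToL2 (hμ : ∀ᵐ z ∂μ, ‖z‖ = 1) (P : ℂ[X]) :
    polyToL2 hμ P =ᵐ[μ] fun z => P.eval z :=
  MemLp.coeFn_toLp (memLp_eval_of_ae_norm_eq_one hμ P 2)

theorem inner_polyToL2 (hμ : ∀ᵐ z ∂μ, ‖z‖ = 1) (P Q : ℂ[X]) :
    ⟪polyToL2 hμ P, polyToL2 hμ Q⟫_ℂ = ∫ z, conj (P.eval z) * Q.eval z ∂μ := by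
  rw [L2.inner_def]
  refine integral_congr_ae ?_
  filter_upwards [coeFn_polyToL2 hμ P, coeFn_polyToL2 hμ Q] with z hP hQ
  rw [hP, hQ, RCLike.inner_apply, mul_comm]

theorem norm_polyToL2_X_mul (hμ : ∀ᵐ z ∂μ, ‖z‖ = 1) (P : ℂ[X]) :
    ‖polyToL2 hμ (X * P)‖ = ‖polyToL2 hμ P‖ := by
  simp only [polyToL2, LinearMap.coe_mk, AddHom.coe_mk, Lp.norm_toLp]
  congr 1
  refine eLpNorm_congr_norm_ae ?_
  filter_upwards [hμ] with z hz
  simp [hz]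

theorem polyToL2_ne_zero (hμ : ∀ᵐ z ∂μ, ‖z‖ = 1) (hsupp : ∀ s : Finset ℂ, μ (↑s)ᶜ ≠ 0)
    {P : ℂ[X]} (hP : P ≠ 0) : polyToL2 hμ P ≠ 0 := by
  intro h
  apply hsupp P.roots.toFinset
  refine ae_iff.1 ?_
  filter_upwards [coeFn_polyToL2 hμ P, Lp.eq_zero_iff_ae_eq_zero.1 h] with z h1 h2
  rw [Finset.mem_coe, Multiset.mem_toFinset, mem_roots hP, IsRoot, ← h1, h2, Pi.zero_apply]

theorem inner_polyToL2_eq_zero_of_natDegree_lt (hμ : ∀ᵐ z ∂μ, ‖z‖ = 1)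
    {Φ : ℕ → ℂ[X]} (hΦ : IsMonicOPUC μ Φ) {n : ℕ} {q : ℂ[X]} (hq : q.natDegree < n) :
    ⟪polyToL2 hμ q, polyToL2 hμ (Φ n)⟫_ℂ = 0 := by
  rw [q.as_sum_range' n hq, map_sum, sum_inner]
  refine Finset.sum_eq_zero fun j hj => ?_
  rw [← C_mul_X_pow_eq_monomial, ← smul_eq_C_mul, map_smul, inner_smul_left, inner_polyToL2]
  simp only [eval_pow, eval_X, map_pow, (hΦ n).2 j (Finset.mem_range.1 hj), mul_zero]

end CircleL2

theorem IsNontrivialOnCircle.ae_norm_eq_one_s9 {μ : Measure ℂ} (hμ : IsNontrivialOnCircle μ) :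
    ∀ᵐ z ∂μ, ‖z‖ = 1 :=
  ae_iff.2 hμ.onCircle

theorem norm_lt_one_of_eval_eq_zero {μ : Measure ℂ} (hμ : IsNontrivialOnCircle μ)
    {Φ : ℕ → ℂ[X]} (hΦ : IsMonicOPUC μ Φ) {n : ℕ} {z₀ : ℂ} (hz₀ : (Φ n).eval z₀ = 0) :
    ‖z₀‖ < 1 := by
  have := hμ.prob
  set T := polyToL2 hμ.ae_norm_eq_one_s9
  have hΦ0 : Φ n ≠ 0 := (hΦ n).1.1.ne_zero
  obtain ⟨q, hq⟩ := dvd_iff_isRoot.2 hz₀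
  have hq0 : q ≠ 0 := by rintro rfl; exact hΦ0 (by rw [hq, mul_zero])
  have hqdeg : q.natDegree < n := by
    have := natDegree_mul (X_sub_C_ne_zero z₀) hq0
    rw [← hq, (hΦ n).1.2, natDegree_X_sub_C] at this
    omega
  have horth : ⟪T (Φ n), z₀ • T q⟫_ℂ = 0 := by
    rw [inner_smul_right, inner_eq_zero_symm.1
      (inner_polyToL2_eq_zero_of_natDegree_lt _ hΦ hqdeg), mul_zero]
  have hXq : T (X * q) = T (Φ n) + z₀ • T q := by
    rw [← map_smul, ← map_add, hq, smul_eq_C_mul]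
    ring_nf
  have hpyth : ‖T q‖ ^ 2 = ‖T (Φ n)‖ ^ 2 + ‖z₀‖ ^ 2 * ‖T q‖ ^ 2 := by
    have := norm_add_sq_eq_norm_sq_add_norm_sq_of_inner_eq_zero _ _ horth
    rw [← hXq, norm_polyToL2_X_mul, norm_smul] at this
    linear_combination this
  have hpos : 0 < ‖T (Φ n)‖ := norm_pos_iff.2 (polyToL2_ne_zero _ hμ.infiniteSupport hΦ0)
  by_contra! h
  nlinarith [one_le_pow₀ (n := 2) h, sq_nonneg ‖T q‖, pow_pos hpos 2]

theorem revStar_eq_reflect_map {n : ℕ} {P : ℂ[X]} (hP : P.natDegree ≤ n) :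
    revStar n P = (P.map (starRingEnd ℂ)).reflect n := by
  ext j
  simp only [revStar, finsetSum_coeff, coeff_C_mul_X_pow, coeff_reflect, coeff_map,
    Finset.sum_ite_eq, Finset.mem_range]
  split_ifs with hj
  · rw [revAt_le (Nat.lt_succ_iff.1 hj)]
  · rw [revAt_eq_self_of_lt (by omega), coeff_eq_zero_of_natDegree_lt (by omega), map_zero]

theorem revStar_eval_zero {n : ℕ} {P : ℂ[X]} (hP : P.natDegree ≤ n) :
    (revStar n P).eval 0 = conj (P.coeff n) := by
  rw [← coeff_zero_eq_eval_zero, revStar_eq_reflect_map hP, coeff_reflect, revAt_le n.zero_le,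
    Nat.sub_zero, coeff_map]

theorem revStar_eval_eq_zero_iff {n : ℕ} {P : ℂ[X]} (hP : P.natDegree ≤ n) {w : ℂ}
    (hw : w ≠ 0) : (revStar n P).eval w = 0 ↔ P.eval (conj w)⁻¹ = 0 := by
  have := invertibleOfNonzero (inv_ne_zero hw)
  have hinv := eval₂_reflect_eq_zero_iff (RingHom.id ℂ) w⁻¹ n (P.map (starRingEnd ℂ))
    (natDegree_map_le.trans hP)
  rw [invOf_eq_inv, inv_inv] at hinv
  rw [revStar_eq_reflect_map hP, eval, hinv, ← eval, ← map_inv₀, ← Complex.conj_conj w⁻¹,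
    eval_map_apply, map_eq_zero, Complex.conj_conj]

/-- all zeros of `Φ_n` lie in the open unit disk, and all zeros of `Φ_n^*`
lie outside the closed unit disk. -/
theorem stmt9 (μ : Measure ℂ) (hμ : IsNontrivialOnCircle μ)
    (Φ : ℕ → Polynomial ℂ) (hΦ : IsMonicOPUC μ Φ) :
    (∀ (n : ℕ) (z : ℂ), (Φ n).eval z = 0 → ‖z‖ < 1) ∧
    (∀ (n : ℕ) (z : ℂ), (revStar n (Φ n)).eval z = 0 → 1 < ‖z‖) := by
  have hdisk : ∀ (n : ℕ) (z : ℂ), (Φ n).eval z = 0 → ‖z‖ < 1 :=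
    fun n z hz => norm_lt_one_of_eval_eq_zero hμ hΦ hz
  refine ⟨hdisk, fun n w hw => ?_⟩
  have hdeg : (Φ n).natDegree ≤ n := (hΦ n).1.2.le
  have hlead : (Φ n).coeff n = 1 := by simpa [(hΦ n).1.2] using (hΦ n).1.1.coeff_natDegree
  have hw0 : w ≠ 0 := by
    rintro rfl
    rw [revStar_eval_zero hdeg, hlead, map_one] at hw
    exact one_ne_zero hw
  have hroot := hdisk n _ ((revStar_eval_eq_zero_iff hdeg hw0).1 hw)
  rwa [norm_inv, Complex.norm_conj, inv_lt_one₀ (norm_pos_iff.2 hw0)] at hroot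

end
end
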